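/- Let H be an inner product space, x_1,…,x_n ∈ H, and k ≥ 1 such that ‖x_i‖·‖x_j‖ ≤ k·Re⟨x_i, x_j⟩ for all 1 ≤ i < j ≤ n. Then (∑_{i=1}^n ‖x_i‖)² + (k − 1)·∑_{i=1}^n ‖x_i‖² ≤ k·‖∑_{i=1}^n x_i‖². -/

import Mathlib

/-!
Expand `‖∑ xᵢ‖² = ∑ᵢ ∑ⱼ Re⟪xᵢ, xⱼ⟫` and `(∑ ‖xᵢ‖)² = ∑ᵢ ∑ⱼ ‖xᵢ‖ ‖xⱼ‖`. On the diagonal the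
extra term `(k - 1) ‖xᵢ‖²` makes the two sides agree exactly (`‖xᵢ‖² = Re⟪xᵢ, xᵢ⟫`), and off the
diagonal the hypothesis, which is symmetric in `i, j`, compares them term by term.
-/

open Finset RCLike
open scoped InnerProductSpace

section

variable {𝕜 H ι : Type*} [RCLike 𝕜] [NormedAddCommGroup H] [InnerProductSpace 𝕜 H]

lemma norm_sum_sq_eq_sum_sum_re_inner (s : Finset ι) (x : ι → H) :
    ‖∑ i ∈ s, x i‖ ^ 2 = ∑ i ∈ s, ∑ j ∈ s, re ⟪x i, x j⟫_𝕜 := by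
  rw [← @inner_self_eq_norm_sq 𝕜, sum_inner, map_sum]
  simp_rw [inner_sum, map_sum]

lemma sq_sum_norm_add_mul_sum_norm_sq_le_mul_norm_sum_sq (s : Finset ι) (x : ι → H) (k : ℝ)
    (h : ∀ i ∈ s, ∀ j ∈ s, i ≠ j → ‖x i‖ * ‖x j‖ ≤ k * re ⟪x i, x j⟫_𝕜) :
    (∑ i ∈ s, ‖x i‖) ^ 2 + (k - 1) * ∑ i ∈ s, ‖x i‖ ^ 2 ≤ k * ‖∑ i ∈ s, x i‖ ^ 2 := by
  classical
  have expand_lhs : (∑ i ∈ s, ‖x i‖) ^ 2 + (k - 1) * ∑ i ∈ s, ‖x i‖ ^ 2 =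
      ∑ i ∈ s, ∑ j ∈ s, (‖x i‖ * ‖x j‖ + if i = j then (k - 1) * ‖x i‖ ^ 2 else 0) := by
    rw [sq, sum_mul_sum, mul_sum, ← sum_add_distrib]
    refine sum_congr rfl fun i hi ↦ ?_
    rw [sum_add_distrib, sum_ite_eq s i fun _ ↦ (k - 1) * ‖x i‖ ^ 2, if_pos hi]
  rw [expand_lhs, norm_sum_sq_eq_sum_sum_re_inner (𝕜 := 𝕜), mul_sum]
  gcongr with i hi
  rw [mul_sum]
  gcongr with j hj
  by_cases hij : i = j
  · subst hij
    rw [if_pos rfl, inner_self_eq_norm_sq]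
    exact le_of_eq (by ring)
  · rw [if_neg hij, add_zero]
    exact h i hi j hj hij

end

theorem stmt_16_general {𝕜 H : Type*} [RCLike 𝕜] [NormedAddCommGroup H] [InnerProductSpace 𝕜 H]
    (n : ℕ) (x : ℕ → H) (k : ℝ)
    (h : ∀ i ∈ Finset.Icc 1 n, ∀ j ∈ Finset.Icc 1 n, i < j →
      ‖x i‖ * ‖x j‖ ≤ k * RCLike.re (inner 𝕜 (x i) (x j) : 𝕜)) :
    (∑ i ∈ Finset.Icc 1 n, ‖x i‖) ^ 2 + (k - 1) * ∑ i ∈ Finset.Icc 1 n, ‖x i‖ ^ 2 ≤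
      k * ‖∑ i ∈ Finset.Icc 1 n, x i‖ ^ 2 := by
  refine sq_sum_norm_add_mul_sum_norm_sq_le_mul_norm_sum_sq (𝕜 := 𝕜) _ x k fun i hi j hj hij ↦ ?_
  rcases hij.lt_or_gt with hlt | hgt
  · exact h i hi j hj hlt
  · rw [mul_comm, inner_re_symm]
    exact h j hj i hi hgt

theorem stmt_16 {𝕜 H : Type*} [RCLike 𝕜] [NormedAddCommGroup H] [InnerProductSpace 𝕜 H]
    (n : ℕ) (x : ℕ → H) (k : ℝ) (hk : 1 ≤ k)
    (h : ∀ i ∈ Finset.Icc 1 n, ∀ j ∈ Finset.Icc 1 n, i < j →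
      ‖x i‖ * ‖x j‖ ≤ k * RCLike.re (inner 𝕜 (x i) (x j) : 𝕜)) :
    (∑ i ∈ Finset.Icc 1 n, ‖x i‖) ^ 2 + (k - 1) * ∑ i ∈ Finset.Icc 1 n, ‖x i‖ ^ 2 ≤
      k * ‖∑ i ∈ Finset.Icc 1 n, x i‖ ^ 2 :=
  stmt_16_general n x k h
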